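/- For positive masses m₁, m₂, m₃ with m₂₃ = m₂m₃/(m₂+m₃) and m₃₁ = m₃m₁/(m₃+m₁), one has for all real q, p: q²/(2m₂₃) + q·p/m₃ + p²/(2m₃₁) ≥ (q² + p²)/(2·max{m₁, m₂}). -/

import Mathlib

/-!
The energy splits pairwise: since `1 / m₂₃ = 1 / m₂ + 1 / m₃` and `1 / m₃₁ = 1 / m₃ + 1 / m₁`,
`q² / (2m₂₃) + qp / m₃ + p² / (2m₃₁) = q² / (2m₂) + p² / (2m₁) + (q + p)² / (2m₃)`.
Dropping the last, nonnegative term and replacing `m₁, m₂` by `max m₁ m₂` gives the bound.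
-/

lemma div_two_mul_mul_div_add {a b : ℝ} (ha : a ≠ 0) (hb : b ≠ 0) (x : ℝ) :
    x / (2 * (a * b / (a + b))) = x / (2 * a) + x / (2 * b) := by
  field_simp
  ring

lemma threeBody_kinetic_eq {m1 m2 m3 : ℝ} (h1 : 0 < m1) (h2 : 0 < m2) (h3 : 0 < m3) (q p : ℝ) :
    q ^ 2 / (2 * (m2 * m3 / (m2 + m3))) + q * p / m3 + p ^ 2 / (2 * (m3 * m1 / (m3 + m1))) =
      q ^ 2 / (2 * m2) + p ^ 2 / (2 * m1) + (q + p) ^ 2 / (2 * m3) := by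
  rw [div_two_mul_mul_div_add h2.ne' h3.ne', div_two_mul_mul_div_add h3.ne' h1.ne']
  field_simp
  ring

lemma sq_div_two_mul_le {m M : ℝ} (hm : 0 < m) (hmM : m ≤ M) (x : ℝ) :
    x ^ 2 / (2 * M) ≤ x ^ 2 / (2 * m) := by
  gcongr

/-- For positive masses, q²/(2m₂₃) + qp/m₃ + p²/(2m₃₁) ≥ (q²+p²)/(2 max{m₁,m₂}). -/
theorem stmt_3 (m1 m2 m3 : ℝ) (h1 : 0 < m1) (h2 : 0 < m2) (h3 : 0 < m3) (q p : ℝ) :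
    (q ^ 2 + p ^ 2) / (2 * max m1 m2) ≤
      q ^ 2 / (2 * (m2 * m3 / (m2 + m3))) + q * p / m3 +
        p ^ 2 / (2 * (m3 * m1 / (m3 + m1))) := by
  rw [threeBody_kinetic_eq h1 h2 h3, add_div]
  have hq := sq_div_two_mul_le h2 (le_max_right m1 m2) q
  have hp := sq_div_two_mul_le h1 (le_max_left m1 m2) p
  have hqp : 0 ≤ (q + p) ^ 2 / (2 * m3) := by positivity
  linarith
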